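/- With the hypotheses of the consensus iteration x_s = (G ⊗ I_m) x_{s−1} + δ_s w_s (G = I_N − (1/κ)L, graph connected, κ > λ_N/2, δ_s ∈ (0,1), δ_s → 0, (w_s) bounded), for every ε > 0 there exists S such that for all s > S and all pairs of agents i, j, the block components satisfy ‖x_{i,s} − x_{j,s}‖ < ε. -/

import Mathlib

open Matrix
open scoped Kronecker

/-- `L` is the Laplacian of the undirected weighted graph with adjacency matrix `A`. -/
def IsLaplacianOf {N : ℕ} (L A : Matrix (Fin N) (Fin N) ℝ) : Prop :=
  A.IsSymm ∧ (∀ i j, 0 ≤ A i j) ∧ (∀ i, A i i = 0) ∧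
    L = Matrix.diagonal (fun i => ∑ j, A i j) - A

/-- Connectedness of the weighted graph given by adjacency matrix `A`. -/
def GraphConnected {N : ℕ} (A : Matrix (Fin N) (Fin N) ℝ) : Prop :=
  ∀ i j : Fin N, Relation.ReflTransGen (fun a b => 0 < A a b) i j

/-!
Fix a coordinate `a` of the agents' blocks. Since `G = I − L/κ` is symmetric with `G1 = 1`, it
commutes with the centering matrix `I − 11ᵀ/N`, so the `a`-th disagreement vector `d_s` obeys
`d_{s+1} = G d_s + δ_{s+1} (I − 11ᵀ/N) w_{s+1}` and stays in the subspace of zero-sum vectors.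
On that subspace the eigenvalues of `G` are `1 − λ/κ` with `0 < λ ≤ λ_N < 2κ` (`λ > 0` by
connectivity), so `G` contracts by some `ρ < 1`, and `‖d_{s+1}‖ ≤ ρ ‖d_s‖ + o(1)` forces
`d_s → 0`.
-/

open Filter Topology

namespace IsLaplacianOf

variable {N : ℕ} {L A : Matrix (Fin N) (Fin N) ℝ}

theorem isSymm (hL : IsLaplacianOf L A) : L.IsSymm := by
  obtain ⟨hA, -, -, rfl⟩ := hL
  exact (isSymm_diagonal _).sub hA

theorem mulVec_one (hL : IsLaplacianOf L A) : L *ᵥ 1 = 0 := by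
  obtain ⟨-, -, -, rfl⟩ := hL
  ext i
  simp [mulVec, dotProduct, diagonal_apply]

theorem one_vecMul (hL : IsLaplacianOf L A) : 1 ᵥ* L = 0 := by
  rw [← mulVec_transpose, hL.isSymm.eq, hL.mulVec_one]

theorem two_mul_dotProduct_mulVec (hL : IsLaplacianOf L A) (v : Fin N → ℝ) :
    2 * (v ⬝ᵥ L *ᵥ v) = ∑ i, ∑ j, A i j * (v i - v j) ^ 2 := by
  obtain ⟨hA, -, -, rfl⟩ := hL
  have hswap : ∑ i, ∑ j, A i j * v j ^ 2 = ∑ i, ∑ j, A i j * v i ^ 2 := by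
    rw [Finset.sum_comm]
    simp_rw [hA.apply]
  have hdiag : v ⬝ᵥ diagonal (fun i => ∑ j, A i j) *ᵥ v = ∑ i, ∑ j, A i j * v i ^ 2 := by
    simp only [dotProduct, mulVec_diagonal, Finset.sum_mul, Finset.mul_sum]
    exact Finset.sum_congr rfl fun i _ => Finset.sum_congr rfl fun j _ => by ring
  have hoff : v ⬝ᵥ A *ᵥ v = ∑ i, ∑ j, A i j * (v i * v j) := by
    simp only [dotProduct, mulVec, Finset.mul_sum]
    exact Finset.sum_congr rfl fun i _ => Finset.sum_congr rfl fun j _ => by ring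
  have hexpand : ∑ i, ∑ j, A i j * (v i - v j) ^ 2 = ∑ i, ∑ j, A i j * v i ^ 2
      + ∑ i, ∑ j, A i j * v j ^ 2 - 2 * ∑ i, ∑ j, A i j * (v i * v j) := by
    simp only [Finset.mul_sum, ← Finset.sum_add_distrib, ← Finset.sum_sub_distrib]
    exact Finset.sum_congr rfl fun i _ => Finset.sum_congr rfl fun j _ => by ring
  rw [sub_mulVec, dotProduct_sub, hdiag, hoff, hexpand, hswap]
  ring

theorem dotProduct_mulVec_nonneg (hL : IsLaplacianOf L A) (v : Fin N → ℝ) :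
    0 ≤ v ⬝ᵥ L *ᵥ v := by
  have h := hL.two_mul_dotProduct_mulVec v
  have : 0 ≤ ∑ i, ∑ j, A i j * (v i - v j) ^ 2 :=
    Finset.sum_nonneg fun i _ => Finset.sum_nonneg fun j _ => mul_nonneg (hL.2.1 i j) (sq_nonneg _)
  linarith

theorem apply_eq_of_mulVec_eq_zero (hL : IsLaplacianOf L A) (hconn : GraphConnected A)
    {v : Fin N → ℝ} (hv : L *ᵥ v = 0) (i j : Fin N) : v i = v j := by
  have hterm : ∀ i j, 0 ≤ A i j * (v i - v j) ^ 2 := fun i j =>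
    mul_nonneg (hL.2.1 i j) (sq_nonneg _)
  have hzero : ∑ i, ∑ j, A i j * (v i - v j) ^ 2 = 0 := by
    rw [← hL.two_mul_dotProduct_mulVec, hv, dotProduct_zero, mul_zero]
  have hedge : ∀ a b, 0 < A a b → v a = v b := by
    intro a b hab
    have h := (Finset.sum_eq_zero_iff_of_nonneg fun b _ => hterm a b).1
      ((Finset.sum_eq_zero_iff_of_nonneg fun a _ => Finset.sum_nonneg fun b _ => hterm a b).1
        hzero a (Finset.mem_univ a)) b (Finset.mem_univ b)
    rw [mul_eq_zero, or_iff_right hab.ne', sq_eq_zero_iff, sub_eq_zero] at h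
    exact h
  induction hconn i j with
  | refl => rfl
  | tail _ hbc ih => exact ih.trans (hedge _ _ hbc)

theorem hasEigenvalue_zero (hL : IsLaplacianOf L A) (hN : 0 < N) :
    Module.End.HasEigenvalue (toLin' L) 0 := by
  have : NeZero N := ⟨hN.ne'⟩
  refine Module.End.hasEigenvalue_of_hasEigenvector (x := 1) ⟨?_, one_ne_zero⟩
  rw [Module.End.mem_eigenspace_iff, toLin'_apply, hL.mulVec_one, zero_smul]

theorem pos_of_mulVec_eq_smul (hL : IsLaplacianOf L A) (hconn : GraphConnected A)
    {v : Fin N → ℝ} (hv : v ≠ 0) (hsum : ∑ i, v i = 0) {lam : ℝ} (hlam : L *ᵥ v = lam • v) :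
    0 < lam := by
  have hvv : 0 < v ⬝ᵥ v := (Finset.sum_nonneg fun i _ => mul_self_nonneg (v i)).lt_of_ne
    (Ne.symm (mt dotProduct_self_eq_zero.1 hv))
  have hnonneg : 0 ≤ lam := by
    have h := hL.dotProduct_mulVec_nonneg v
    rw [hlam, dotProduct_smul, smul_eq_mul] at h
    exact nonneg_of_mul_nonneg_left h hvv
  refine hnonneg.lt_of_ne fun h0 => hv ?_
  have hconst := hL.apply_eq_of_mulVec_eq_zero hconn (by rw [hlam, ← h0, zero_smul])
  ext i
  have : (N : ℝ) * v i = 0 := by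
    rw [← hsum, Finset.sum_congr rfl fun j _ => hconst j i]
    simp
  exact (mul_eq_zero.1 this).resolve_left (Nat.cast_ne_zero.2 (Fin.pos i).ne')

theorem one_sub_smul_mulVec_one (hL : IsLaplacianOf L A) (c : ℝ) : (1 - c • L) *ᵥ 1 = 1 := by
  rw [sub_mulVec, one_mulVec, smul_mulVec, hL.mulVec_one, smul_zero, sub_zero]

theorem one_vecMul_one_sub_smul (hL : IsLaplacianOf L A) (c : ℝ) : 1 ᵥ* (1 - c • L) = 1 := by
  rw [vecMul_sub, vecMul_one, vecMul_smul, hL.one_vecMul, smul_zero, sub_zero]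

theorem isSymm_one_sub_smul (hL : IsLaplacianOf L A) (c : ℝ) : (1 - c • L).IsSymm :=
  isSymm_one.sub (hL.isSymm.smul c)

theorem abs_lt_one_of_mulVec_eq_smul (hL : IsLaplacianOf L A) (hconn : GraphConnected A)
    {lamN : ℝ} (hmax : ∀ μ, Module.End.HasEigenvalue (toLin' L) μ → μ ≤ lamN)
    (hlamN : 0 ≤ lamN) {κ : ℝ} (hκ : lamN / 2 < κ) {v : Fin N → ℝ} (hv : v ≠ 0)
    (hsum : ∑ i, v i = 0) {μ : ℝ} (hμ : (1 - κ⁻¹ • L) *ᵥ v = μ • v) : |μ| < 1 := by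
  have hκ0 : 0 < κ := by linarith
  have hLv : L *ᵥ v = (κ * (1 - μ)) • v := by
    have h : κ⁻¹ • (L *ᵥ v) = (1 - μ) • v := by
      rw [sub_smul, one_smul, ← hμ, sub_mulVec, one_mulVec, smul_mulVec, sub_sub_cancel]
    rw [mul_smul, ← h, smul_inv_smul₀ hκ0.ne']
  have hpos := hL.pos_of_mulVec_eq_smul hconn hv hsum hLv
  have hle : κ * (1 - μ) ≤ lamN := hmax _ <| Module.End.hasEigenvalue_of_hasEigenvector
    ⟨by rw [Module.End.mem_eigenspace_iff, toLin'_apply, hLv], hv⟩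
  rw [abs_lt]
  constructor <;> nlinarith

end IsLaplacianOf

namespace LinearMap.IsSymmetric

variable {E : Type*} [NormedAddCommGroup E] [InnerProductSpace ℝ E] [FiniteDimensional ℝ E]
  {T : E →ₗ[ℝ] E}

theorem norm_apply_le_of_abs_eigenvalues_le (hT : T.IsSymmetric) {n : ℕ}
    (hn : Module.finrank ℝ E = n) {c : ℝ} (hc : 0 ≤ c) (h : ∀ i, |hT.eigenvalues hn i| ≤ c)
    (x : E) : ‖T x‖ ≤ c * ‖x‖ := by
  set b := hT.eigenvectorBasis hn
  refine le_of_pow_le_pow_left₀ two_ne_zero (by positivity) ?_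
  rw [← b.repr.norm_map, ← b.repr.norm_map, mul_pow, EuclideanSpace.norm_sq_eq,
    EuclideanSpace.norm_sq_eq, Finset.mul_sum]
  refine Finset.sum_le_sum fun i _ => ?_
  rw [hT.eigenvectorBasis_apply_self_apply, Real.norm_eq_abs, Real.norm_eq_abs, abs_mul,
    mul_pow]
  gcongr
  exact h i

theorem exists_norm_apply_le_of_abs_lt_one (hT : T.IsSymmetric)
    (h : ∀ μ, Module.End.HasEigenvalue T μ → |μ| < 1) :
    ∃ ρ, 0 ≤ ρ ∧ ρ < 1 ∧ ∀ x, ‖T x‖ ≤ ρ * ‖x‖ := by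
  set μ := hT.eigenvalues rfl
  set ρ : NNReal := Finset.univ.sup fun i => ‖μ i‖₊
  refine ⟨ρ, ρ.coe_nonneg, ?_, hT.norm_apply_le_of_abs_eigenvalues_le rfl ρ.coe_nonneg
    fun i => ?_⟩
  · rw [← NNReal.coe_one, NNReal.coe_lt_coe, Finset.sup_lt_iff zero_lt_one]
    exact fun i _ => h _ (hT.hasEigenvalue_eigenvalues rfl i)
  · exact NNReal.coe_le_coe.2 (Finset.le_sup (f := fun i => ‖μ i‖₊) (Finset.mem_univ i))

end LinearMap.IsSymmetric

def disagreementSubspace (N : ℕ) : Submodule ℝ (EuclideanSpace ℝ (Fin N)) where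
  carrier := {v | ∑ i, v i = 0}
  add_mem' {u v} hu hv := by simp_all [Finset.sum_add_distrib]
  zero_mem' := by simp
  smul_mem' c v hv := by simp_all [← Finset.mul_sum]

theorem mem_disagreementSubspace {N : ℕ} {v : EuclideanSpace ℝ (Fin N)} :
    v ∈ disagreementSubspace N ↔ ∑ i, v i = 0 := Iff.rfl

theorem toEuclideanLin_mem_disagreementSubspace {N : ℕ} {G : Matrix (Fin N) (Fin N) ℝ}
    (hG : 1 ᵥ* G = 1) {v : EuclideanSpace ℝ (Fin N)} (hv : v ∈ disagreementSubspace N) :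
    toEuclideanLin G v ∈ disagreementSubspace N := by
  rw [mem_disagreementSubspace] at hv ⊢
  rwa [toLpLin_apply, WithLp.ofLp_toLp, ← one_dotProduct, dotProduct_mulVec, hG, one_dotProduct]

theorem IsLaplacianOf.exists_contraction_on_disagreementSubspace {N : ℕ}
    {L A : Matrix (Fin N) (Fin N) ℝ} (hL : IsLaplacianOf L A) (hconn : GraphConnected A)
    {lamN : ℝ} (hmax : ∀ μ, Module.End.HasEigenvalue (toLin' L) μ → μ ≤ lamN)
    (hlamN : 0 ≤ lamN) {κ : ℝ} (hκ : lamN / 2 < κ) :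
    ∃ ρ, 0 ≤ ρ ∧ ρ < 1 ∧ ∀ v ∈ disagreementSubspace N,
      ‖toEuclideanLin (1 - κ⁻¹ • L) v‖ ≤ ρ * ‖v‖ := by
  have hW : ∀ v ∈ disagreementSubspace N,
      toEuclideanLin (1 - κ⁻¹ • L) v ∈ disagreementSubspace N := fun v =>
    toEuclideanLin_mem_disagreementSubspace (hL.one_vecMul_one_sub_smul _)
  have hT : ((toEuclideanLin (1 - κ⁻¹ • L)).restrict hW).IsSymmetric :=
    (isSymmetric_toEuclideanLin_iff.2 (isHermitian_iff_isSymm.2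
      (hL.isSymm_one_sub_smul _))).restrict_invariant hW
  obtain ⟨ρ, hρ0, hρ1, hρ⟩ := hT.exists_norm_apply_le_of_abs_lt_one fun μ hμ => by
    obtain ⟨v, hv⟩ := hμ.exists_hasEigenvector
    refine hL.abs_lt_one_of_mulVec_eq_smul hconn hmax hlamN hκ (v := WithLp.ofLp v.1) ?_ v.2 ?_
    · exact fun h => hv.2 (Subtype.ext (WithLp.ofLp_injective 2 h))
    · exact congrArg (fun u : disagreementSubspace N => WithLp.ofLp u.1) hv.apply_eq_smul
  exact ⟨ρ, hρ0, hρ1, fun v hv => hρ ⟨v, hv⟩⟩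

theorem tendsto_zero_of_le_mul_add {e c : ℕ → ℝ} {ρ : ℝ} (hρ0 : 0 ≤ ρ) (hρ1 : ρ < 1)
    (he : ∀ s, 0 ≤ e s) (hrec : ∀ s, e (s + 1) ≤ ρ * e s + c s)
    (hc : Tendsto c atTop (𝓝 0)) : Tendsto e atTop (𝓝 0) := by
  refine tendsto_order.2 ⟨fun a ha => Eventually.of_forall fun s => ha.trans_le (he s),
    fun ε hε => ?_⟩
  obtain ⟨S, hS⟩ := eventually_atTop.1 <|
    hc.eventually (ge_mem_nhds (by positivity : (0 : ℝ) < (1 - ρ) * (ε / 2)))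
  have hgeom : ∀ k, e (S + k) ≤ ρ ^ k * e S + ε / 2 := by
    intro k
    induction k with
    | zero =>
      simp only [add_zero, pow_zero, one_mul]
      linarith
    | succ k ih =>
      calc e (S + (k + 1)) ≤ ρ * e (S + k) + c (S + k) := hrec (S + k)
        _ ≤ ρ * (ρ ^ k * e S + ε / 2) + (1 - ρ) * (ε / 2) := by
          gcongr
          exact hS _ (Nat.le_add_right S k)
        _ = ρ ^ (k + 1) * e S + ε / 2 := by ring
  have hsmall : ∀ᶠ k in atTop, ρ ^ k * e S < ε / 2 := by
    refine ((tendsto_pow_atTop_nhds_zero_of_lt_one hρ0 hρ1).mul_const (e S)).eventually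
      (gt_mem_nhds ?_)
    rw [zero_mul]; positivity
  filter_upwards [(tendsto_sub_atTop_nat S).eventually hsmall, eventually_ge_atTop S]
    with s hs hSs
  have := hgeom (s - S)
  rw [Nat.add_sub_cancel' hSs] at this
  linarith

theorem Matrix.kronecker_one_mulVec_apply {l n p R : Type*} [Fintype n] [Fintype p]
    [DecidableEq p] [CommSemiring R] (G : Matrix l n R) (z : n × p → R) (i : l) (a : p) :
    ((G ⊗ₖ (1 : Matrix p p R)) *ᵥ z) (i, a) = (G *ᵥ fun j => z (j, a)) i := by
  simp [mulVec, dotProduct, Fintype.sum_prod_type, one_apply]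

noncomputable def centering (N : ℕ) : Matrix (Fin N) (Fin N) ℝ := 1 - (N : ℝ)⁻¹ • vecMulVec 1 1

theorem centering_mulVec_apply {N : ℕ} (v : Fin N → ℝ) (i : Fin N) :
    (centering N *ᵥ v) i = v i - (N : ℝ)⁻¹ * ∑ j, v j := by
  rw [centering, sub_mulVec, one_mulVec, smul_mulVec, vecMulVec_mulVec, one_dotProduct]
  simp

theorem sum_centering_mulVec {N : ℕ} (v : Fin N → ℝ) : ∑ i, (centering N *ᵥ v) i = 0 := by
  rcases N.eq_zero_or_pos with rfl | hN
  · simp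
  · simp [centering_mulVec_apply, Finset.sum_sub_distrib, hN.ne']

theorem centering_mul_comm {N : ℕ} {G : Matrix (Fin N) (Fin N) ℝ} (hrow : G *ᵥ 1 = 1)
    (hcol : 1 ᵥ* G = 1) : centering N * G = G * centering N := by
  rw [centering, sub_mul, mul_sub, one_mul, mul_one, smul_mul, Matrix.mul_smul, vecMulVec_mul,
    mul_vecMulVec, hrow, hcol]

/-- The `a`-th coordinates of the disagreement vector `((I_N − Y) ⊗ I_m) z`, `Y = 11ᵀ/N`. -/
noncomputable def coordDisagreement (N : ℕ) {m : ℕ} (a : Fin m) :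
    (Fin N × Fin m → ℝ) →L[ℝ] EuclideanSpace ℝ (Fin N) :=
  LinearMap.toContinuousLinearMap <| toEuclideanLin (centering N) ∘ₗ
    (WithLp.linearEquiv 2 ℝ (Fin N → ℝ)).symm.toLinearMap ∘ₗ
      LinearMap.funLeft ℝ ℝ fun i => (i, a)

section coordDisagreement

variable {N m : ℕ} (a : Fin m) (z : Fin N × Fin m → ℝ)

theorem coordDisagreement_apply :
    coordDisagreement N a z = WithLp.toLp 2 (centering N *ᵥ fun i => z (i, a)) := rfl

theorem coordDisagreement_mem : coordDisagreement N a z ∈ disagreementSubspace N :=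
  sum_centering_mulVec _

theorem coordDisagreement_apply_sub_apply (i j : Fin N) :
    coordDisagreement N a z i - coordDisagreement N a z j = z (i, a) - z (j, a) := by
  simp only [coordDisagreement_apply, WithLp.ofLp_toLp, centering_mulVec_apply]
  ring

theorem coordDisagreement_kronecker_one_mulVec {G : Matrix (Fin N) (Fin N) ℝ}
    (hrow : G *ᵥ 1 = 1) (hcol : 1 ᵥ* G = 1) :
    coordDisagreement N a ((G ⊗ₖ (1 : Matrix (Fin m) (Fin m) ℝ)) *ᵥ z) =
      toEuclideanLin G (coordDisagreement N a z) := by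
  simp only [coordDisagreement_apply, kronecker_one_mulVec_apply, toLpLin_apply,
    mulVec_mulVec, centering_mul_comm hrow hcol]

end coordDisagreement

theorem tendsto_coordDisagreement_zero {N m : ℕ} {G : Matrix (Fin N) (Fin N) ℝ}
    (hrow : G *ᵥ 1 = 1) (hcol : 1 ᵥ* G = 1) {ρ : ℝ} (hρ0 : 0 ≤ ρ) (hρ1 : ρ < 1)
    (hρ : ∀ v ∈ disagreementSubspace N, ‖toEuclideanLin G v‖ ≤ ρ * ‖v‖)
    {δ : ℕ → ℝ} (hδ0 : Tendsto δ atTop (𝓝 0)) {w : ℕ → Fin N × Fin m → ℝ} {B : ℝ}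
    (hw : ∀ s, ‖w s‖ ≤ B) {x : ℕ → Fin N × Fin m → ℝ}
    (hx : ∀ s, x (s + 1) = (G ⊗ₖ (1 : Matrix (Fin m) (Fin m) ℝ)) *ᵥ x s + δ (s + 1) • w (s + 1))
    (a : Fin m) : Tendsto (fun s => coordDisagreement N a (x s)) atTop (𝓝 0) := by
  set D := coordDisagreement N a
  have hforcing : Tendsto (fun s => δ (s + 1) • D (w (s + 1))) atTop (𝓝 0) :=
    (hδ0.comp (tendsto_add_atTop_nat 1)).zero_smul_isBoundedUnder_le
      ⟨‖D‖ * B, eventually_map.2 <| Eventually.of_forall fun s => D.le_opNorm_of_le (hw (s + 1))⟩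
  refine tendsto_zero_iff_norm_tendsto_zero.2 <| tendsto_zero_of_le_mul_add hρ0 hρ1
    (fun _ => norm_nonneg _) (fun s => ?_) (tendsto_zero_iff_norm_tendsto_zero.1 hforcing)
  calc ‖D (x (s + 1))‖ = ‖toEuclideanLin G (D (x s)) + δ (s + 1) • D (w (s + 1))‖ := by
        rw [hx, map_add, map_smul, coordDisagreement_kronecker_one_mulVec _ _ hrow hcol]
    _ ≤ ρ * ‖D (x s)‖ + ‖δ (s + 1) • D (w (s + 1))‖ := by
        refine (norm_add_le _ _).trans ?_
        gcongr
        exact hρ _ (coordDisagreement_mem _ _)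

theorem stmt8_general {N m : ℕ} (hN : 0 < N) (L A : Matrix (Fin N) (Fin N) ℝ)
    (hL : IsLaplacianOf L A) (hconn : GraphConnected A)
    (lamN : ℝ)
    (hmax : ∀ μ : ℝ, Module.End.HasEigenvalue (Matrix.toLin' L) μ → μ ≤ lamN)
    (κ : ℝ) (hκ : lamN / 2 < κ)
    (G : Matrix (Fin N) (Fin N) ℝ) (hG : G = 1 - κ⁻¹ • L)
    (δ : ℕ → ℝ)
    (hδ0 : Filter.Tendsto δ Filter.atTop (nhds 0))
    (w : ℕ → (Fin N × Fin m → ℝ)) (B : ℝ) (hw : ∀ s : ℕ, ‖w s‖ ≤ B)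
    (x : ℕ → (Fin N × Fin m → ℝ))
    (hx : ∀ s : ℕ, 1 ≤ s →
      x s = (G ⊗ₖ (1 : Matrix (Fin m) (Fin m) ℝ)) *ᵥ x (s - 1) + δ s • w s) :
    ∀ ε : ℝ, 0 < ε → ∃ S : ℕ, ∀ s : ℕ, S < s → ∀ i j : Fin N,
      ‖(fun a => x s (i, a)) - (fun a => x s (j, a))‖ < ε := by
  subst hG
  obtain ⟨ρ, hρ0, hρ1, hρ⟩ := hL.exists_contraction_on_disagreementSubspace hconn hmax
    (hmax 0 (hL.hasEigenvalue_zero hN)) hκ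
  have hdisagree := tendsto_coordDisagreement_zero (hL.one_sub_smul_mulVec_one _)
    (hL.one_vecMul_one_sub_smul _) hρ0 hρ1 hρ hδ0 hw fun s => by simpa using hx (s + 1) le_add_self
  have hagree : ∀ i j, Tendsto (fun s => (fun a => x s (i, a)) - fun a => x s (j, a))
      atTop (𝓝 0) := fun i j => tendsto_pi_nhds.2 fun a => by
    have hcoord : ∀ k, Tendsto (fun s => coordDisagreement N a (x s) k) atTop (𝓝 0) :=
      fun k => (PiLp.continuous_apply 2 _ k).tendsto' 0 0 rfl |>.comp (hdisagree a)
    simpa [coordDisagreement_apply_sub_apply] using (hcoord i).sub (hcoord j)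
  intro ε hε
  obtain ⟨S, hS⟩ := eventually_atTop.1 <| eventually_all.2 fun i => eventually_all.2 fun j =>
    (hagree i j).norm.eventually (gt_mem_nhds (by rwa [norm_zero]))
  exact ⟨S, fun s hs => hS s hs.le⟩

/-- under the hypotheses of the consensus iteration
x_s = (G ⊗ I_m) x_{s−1} + δ_s w_s (connected graph, κ > λ_N/2, δ_s ∈ (0,1), δ_s → 0,
(w_s) bounded), for every ε > 0 there is S such that for all s > S and all agents i, j,
the blocks satisfy ‖x_{i,s} − x_{j,s}‖ < ε. -/
theorem stmt8 {N m : ℕ} (hN : 0 < N) (L A : Matrix (Fin N) (Fin N) ℝ)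
    (hL : IsLaplacianOf L A) (hconn : GraphConnected A)
    (lamN : ℝ)
    (hlamN : Module.End.HasEigenvalue (Matrix.toLin' L) lamN)
    (hmax : ∀ μ : ℝ, Module.End.HasEigenvalue (Matrix.toLin' L) μ → μ ≤ lamN)
    (κ : ℝ) (hκ : lamN / 2 < κ)
    (G : Matrix (Fin N) (Fin N) ℝ) (hG : G = 1 - κ⁻¹ • L)
    (δ : ℕ → ℝ) (hδ : ∀ s : ℕ, 1 ≤ s → 0 < δ s ∧ δ s < 1)
    (hδ0 : Filter.Tendsto δ Filter.atTop (nhds 0))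
    (w : ℕ → (Fin N × Fin m → ℝ)) (B : ℝ) (hw : ∀ s : ℕ, ‖w s‖ ≤ B)
    (x : ℕ → (Fin N × Fin m → ℝ))
    (hx : ∀ s : ℕ, 1 ≤ s →
      x s = (G ⊗ₖ (1 : Matrix (Fin m) (Fin m) ℝ)) *ᵥ x (s - 1) + δ s • w s) :
    ∀ ε : ℝ, 0 < ε → ∃ S : ℕ, ∀ s : ℕ, S < s → ∀ i j : Fin N,
      ‖(fun a => x s (i, a)) - (fun a => x s (j, a))‖ < ε :=
  stmt8_general hN L A hL hconn lamN hmax κ hκ G hG δ hδ0 w B hw x hx
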